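/- Let R = k[x,y]/(y² − x³ − λx²), let s be the singular point of the curve (maximal ideal m = (x,y)), and let θ ∈ k. The ideal I_θ = ⟨x², y + θx⟩ ⊂ R becomes principal after localization at m if and only if θ² − λ ≠ 0. -/

import Mathlib

/-!
If `θ² ≠ λ`, then `(y + θx)(y − θx) = x²(x + λ − θ²)` with `x + λ − θ²` a unit at the singular
point, so locally `I_θ = (y + θx)`.

If `θ² = λ`, a two-generated ideal of a local ring is principal only if one generator divides the
other: `s x² ∈ (y + θx)` or `s (y + θx) ∈ (x²)` for some `s` with `s(0,0) ≠ 0`. Map `R` into `k[t]`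
by the normalization `φ : x ↦ q := t² − θ², y ↦ t q`, so that `y + θx ↦ (t + θ) q`; after
cancelling, either relation reads `φ f = φ g · (t − θ)` with `s ∈ {f, g}`. Every `φ f` is congruent
modulo `q` to the constant `f(0,0)`, so `q` divides the linear polynomial `g(0,0)(t − θ) − f(0,0)`,
which therefore vanishes, forcing `s(0,0) = 0`.
-/

set_option synthInstance.maxHeartbeats 1000000
set_option maxHeartbeats 1000000

/-- The coordinate ring `R = k[x,y]/(y² − x³ − λx²)` of the singular cubic. -/
noncomputable abbrev NodalRing (k : Type*) [Field k] (lam : k) : Type _ :=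
  MvPolynomial (Fin 2) k ⧸
    (Ideal.span {(MvPolynomial.X 1 : MvPolynomial (Fin 2) k) ^ 2
      - MvPolynomial.X 0 ^ 3 - MvPolynomial.C lam * MvPolynomial.X 0 ^ 2})

/-- The class of `x` in `R`. -/
noncomputable abbrev nx (k : Type*) [Field k] (lam : k) : NodalRing k lam :=
  Ideal.Quotient.mk _ (MvPolynomial.X 0)

/-- The class of `y` in `R`. -/
noncomputable abbrev ny (k : Type*) [Field k] (lam : k) : NodalRing k lam :=
  Ideal.Quotient.mk _ (MvPolynomial.X 1)

/-- The maximal ideal `m = (x, y)` of `R` at the singular point. -/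
noncomputable abbrev singMax (k : Type*) [Field k] (lam : k) : Ideal (NodalRing k lam) :=
  Ideal.span {nx k lam, ny k lam}

theorem IsLocalRing.isPrincipal_span_pair_iff {R : Type*} [CommRing R] [IsLocalRing R]
    {a b : R} : (Ideal.span {a, b}).IsPrincipal ↔ a ∣ b ∨ b ∣ a := by
  refine ⟨fun ⟨g, hg⟩ ↦ ?_, ?_⟩
  · have hdvd : ∀ z ∈ Ideal.span {a, b}, g ∣ z := fun z hz ↦ by
      rw [hg] at hz
      exact Ideal.mem_span_singleton.mp hz
    obtain ⟨c, rfl⟩ := hdvd a (Ideal.subset_span (by simp))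
    obtain ⟨d, rfl⟩ := hdvd b (Ideal.subset_span (by simp))
    obtain ⟨p, q, hpq⟩ : ∃ p q, p * (g * c) + q * (g * d) = g :=
      Ideal.mem_span_pair.mp (hg ▸ Submodule.mem_span_singleton_self g)
    by_cases hc : IsUnit c
    · exact Or.inl (mul_dvd_mul_left g hc.dvd)
    by_cases hd : IsUnit d
    · exact Or.inr (mul_dvd_mul_left g hd.dvd)
    -- otherwise `g = (p c + q d) g` with `p c + q d` in the maximal ideal, forcing `g = 0`
    have hunit : IsUnit (1 - (p * c + q * d)) :=
      IsLocalRing.isUnit_one_sub_self_of_mem_nonunits _ <|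
        (IsLocalRing.maximalIdeal R).add_mem
          ((IsLocalRing.maximalIdeal R).mul_mem_left p hc)
          ((IsLocalRing.maximalIdeal R).mul_mem_left q hd)
    have hg0 : g = 0 :=
      (hunit.mul_left_eq_zero).mp (by linear_combination -hpq)
    simp [hg0]
  · rintro (h | h)
    · exact ⟨a, Ideal.span_pair_eq_span_left_iff_dvd.mpr h⟩
    · exact ⟨b, Ideal.span_pair_eq_span_right_iff_dvd.mpr h⟩

theorem IsLocalization.algebraMap_dvd_algebraMap_iff {R S : Type*} [CommRing R] [CommRing S]
    [Algebra R S] (M : Submonoid R) [IsLocalization M S] {a b : R} :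
    algebraMap R S a ∣ algebraMap R S b ↔ ∃ m ∈ M, a ∣ m * b := by
  simp_rw [← Ideal.mem_span_singleton, ← Set.image_singleton, ← Ideal.map_span,
    IsLocalization.algebraMap_mem_map_algebraMap_iff M]

namespace NodalRing

variable {k : Type*} [Field k] {lam : k}

noncomputable def lift {A : Type*} [CommRing A] [Algebra k A] (a b : A)
    (h : b ^ 2 = a ^ 3 + algebraMap k A lam * a ^ 2) : NodalRing k lam →ₐ[k] A :=
  Ideal.Quotient.liftₐ _ (MvPolynomial.aeval ![a, b]) fun g hg ↦ by
    obtain ⟨c, rfl⟩ := Ideal.mem_span_singleton'.mp hg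
    simp [h]

section lift

variable {A : Type*} [CommRing A] [Algebra k A] {a b : A}
  {h : b ^ 2 = a ^ 3 + algebraMap k A lam * a ^ 2}

@[simp] theorem lift_nx : lift a b h (nx k lam) = a :=
  MvPolynomial.aeval_X _ _

@[simp] theorem lift_ny : lift a b h (ny k lam) = b :=
  MvPolynomial.aeval_X _ _

end lift

theorem algHom_ext {A : Type*} [Semiring A] [Algebra k A] {f g : NodalRing k lam →ₐ[k] A}
    (hx : f (nx k lam) = g (nx k lam)) (hy : f (ny k lam) = g (ny k lam)) : f = g := by
  refine Ideal.Quotient.algHom_ext k (MvPolynomial.algHom_ext fun i ↦ ?_)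
  fin_cases i
  exacts [hx, hy]

theorem ny_sq : ny k lam ^ 2 = nx k lam ^ 3 + algebraMap k _ lam * nx k lam ^ 2 := by
  rw [← sub_eq_zero, sub_add_eq_sub_sub]
  exact Ideal.Quotient.eq_zero_iff_mem.mpr (Ideal.mem_span_singleton_self _)

noncomputable def evalOrigin (lam : k) : NodalRing k lam →ₐ[k] k := lift 0 0 (by simp)

theorem mem_singMax_iff {f : NodalRing k lam} : f ∈ singMax k lam ↔ evalOrigin lam f = 0 := by
  refine ⟨fun hf ↦ ?_, fun hf ↦ ?_⟩
  · obtain ⟨a, b, rfl⟩ := Ideal.mem_span_pair.mp hf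
    simp [evalOrigin]
  · have hmk : Ideal.Quotient.mkₐ k (singMax k lam) =
        (Algebra.ofId k _).comp (evalOrigin lam) := by
      apply algHom_ext <;>
        simpa [evalOrigin, Ideal.Quotient.eq_zero_iff_mem] using Ideal.subset_span (by simp)
    rw [← Ideal.Quotient.eq_zero_iff_mem, ← Ideal.Quotient.mkₐ_eq_mk k, hmk]
    simp [hf]

theorem nx_add_algebraMap_notMem {c : k} (hc : c ≠ 0) :
    nx k lam + algebraMap k _ c ∉ singMax k lam := by
  simpa [mem_singMax_iff, evalOrigin] using hc

theorem ny_add_mul_ny_sub (θ : k) :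
    (ny k lam + algebraMap k _ θ * nx k lam) * (ny k lam - algebraMap k _ θ * nx k lam) =
      nx k lam ^ 2 * (nx k lam + algebraMap k _ (lam - θ ^ 2)) := by
  rw [map_sub, map_pow]
  linear_combination ny_sq (k := k) (lam := lam)

open Polynomial

noncomputable def param (θ : k) : NodalRing k (θ ^ 2) →ₐ[k] k[X] :=
  lift ((X - C θ) * (X + C θ)) (X * ((X - C θ) * (X + C θ))) (by
    rw [Polynomial.algebraMap_eq, map_pow]
    ring)

variable {θ : k}

theorem param_nx : param θ (nx k (θ ^ 2)) = (X - C θ) * (X + C θ) := lift_nx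

theorem param_ny_add_mul_nx :
    param θ (ny k (θ ^ 2) + algebraMap k _ θ * nx k (θ ^ 2)) =
      (X + C θ) * ((X - C θ) * (X + C θ)) := by
  rw [map_add, map_mul, AlgHom.commutes, param, lift_nx, lift_ny, Polynomial.algebraMap_eq]
  ring

theorem param_ny_add_mul_nx_ne_zero :
    param θ (ny k (θ ^ 2) + algebraMap k _ θ * nx k (θ ^ 2)) ≠ 0 := by
  rw [param_ny_add_mul_nx]
  exact ((monic_X_add_C θ).mul ((monic_X_sub_C θ).mul (monic_X_add_C θ))).ne_zero

theorem param_sub_evalOrigin_dvd (f : NodalRing k (θ ^ 2)) :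
    (X - C θ) * (X + C θ) ∣ param θ f - C (evalOrigin _ f) := by
  have hcomp : (Ideal.Quotient.mkₐ k (Ideal.span {(X - C θ) * (X + C θ)})).comp (param θ) =
      (Algebra.ofId k _).comp (evalOrigin _) := by
    apply algHom_ext <;> simp [param, evalOrigin]
  have hf := AlgHom.congr_fun hcomp f
  rw [AlgHom.comp_apply, AlgHom.comp_apply, Ideal.Quotient.mkₐ_eq_mk, Algebra.ofId_apply,
    ← Ideal.Quotient.mk_algebraMap, Polynomial.algebraMap_eq, Ideal.Quotient.eq] at hf
  exact Ideal.mem_span_singleton.mp hf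

theorem evalOrigin_eq_zero_of_param_eq_mul {f g : NodalRing k (θ ^ 2)}
    (h : param θ f = param θ g * (X - C θ)) : evalOrigin _ g = 0 ∧ evalOrigin _ f = 0 := by
  have hdvd : (X - C θ) * (X + C θ) ∣ C (evalOrigin _ g) * (X - C θ) - C (evalOrigin _ f) := by
    convert dvd_sub (param_sub_evalOrigin_dvd f)
      ((param_sub_evalOrigin_dvd g).mul_right (X - C θ)) using 1
    rw [h]
    ring
  have hzero := eq_zero_of_dvd_of_degree_lt hdvd <| by
    calc degree (C (evalOrigin _ g) * (X - C θ) - C (evalOrigin _ f)) ≤ 1 := by compute_degree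
      _ < 2 := by norm_num
      _ = degree ((X - C θ) * (X + C θ)) := by
        rw [degree_mul, degree_X_sub_C, degree_X_add_C]; rfl
  have hg : evalOrigin _ g = 0 := by simpa using congrArg (coeff · 1) hzero
  refine ⟨hg, ?_⟩
  simpa [hg] using hzero

theorem sq_nx_not_dvd_mul_ny_add {s : NodalRing k (θ ^ 2)} (hs : s ∉ singMax k (θ ^ 2)) :
    ¬ nx k (θ ^ 2) ^ 2 ∣ s * (ny k (θ ^ 2) + algebraMap k _ θ * nx k (θ ^ 2)) := by
  rintro ⟨r, hr⟩
  have hparam := congrArg (param θ) hr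
  refine hs (mem_singMax_iff.mpr (evalOrigin_eq_zero_of_param_eq_mul (g := r) ?_).2)
  refine mul_right_cancel₀ (param_ny_add_mul_nx_ne_zero (θ := θ)) ?_
  simp only [map_mul, map_pow, param_nx, param_ny_add_mul_nx] at hparam ⊢
  linear_combination hparam

theorem ny_add_not_dvd_mul_sq_nx {s : NodalRing k (θ ^ 2)} (hs : s ∉ singMax k (θ ^ 2)) :
    ¬ ny k (θ ^ 2) + algebraMap k _ θ * nx k (θ ^ 2) ∣ s * nx k (θ ^ 2) ^ 2 := by
  rintro ⟨r, hr⟩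
  have hparam := congrArg (param θ) hr
  refine hs (mem_singMax_iff.mpr (evalOrigin_eq_zero_of_param_eq_mul (f := r) ?_).1)
  refine mul_right_cancel₀ (param_ny_add_mul_nx_ne_zero (θ := θ)) ?_
  simp only [map_mul, map_pow, param_nx, param_ny_add_mul_nx] at hparam ⊢
  linear_combination -hparam

end NodalRing

theorem ideal_principal_iff_general (k : Type*) [Field k]
    (lam θ : k) [hm : (singMax k lam).IsPrime] :
    (Ideal.map
        (algebraMap (NodalRing k lam) (Localization.AtPrime (singMax k lam)))
        (Ideal.span {nx k lam ^ 2,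
          ny k lam + algebraMap k (NodalRing k lam) θ * nx k lam})).IsPrincipal
      ↔ θ ^ 2 - lam ≠ 0 := by
  rw [Ideal.map_span, Set.image_pair,
    IsLocalRing.isPrincipal_span_pair_iff (R := Localization.AtPrime (singMax k lam)),
    IsLocalization.algebraMap_dvd_algebraMap_iff (S := Localization.AtPrime (singMax k lam))
      (singMax k lam).primeCompl,
    IsLocalization.algebraMap_dvd_algebraMap_iff (S := Localization.AtPrime (singMax k lam))
      (singMax k lam).primeCompl]
  constructor
  · rintro (⟨s, hs, hdvd⟩ | ⟨s, hs, hdvd⟩) hθ <;>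
      obtain rfl : lam = θ ^ 2 := (sub_eq_zero.mp hθ).symm
    exacts [NodalRing.sq_nx_not_dvd_mul_ny_add hs hdvd,
      NodalRing.ny_add_not_dvd_mul_sq_nx hs hdvd]
  · intro hθ
    have hnotMem := NodalRing.nx_add_algebraMap_notMem (lam := lam)
      (sub_ne_zero.mpr (sub_ne_zero.mp hθ).symm)
    refine Or.inr ⟨_, hnotMem, ny k lam - algebraMap k _ θ * nx k lam, ?_⟩
    rw [NodalRing.ny_add_mul_ny_sub, mul_comm]

/-- The ideal `I_θ = ⟨x², y + θx⟩ ⊆ R = k[x,y]/(y² − x³ − λx²)` becomes a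
principal ideal in the localization of `R` at the maximal ideal `m = (x,y)`
of the singular point if and only if `θ² − λ ≠ 0`. -/
theorem ideal_principal_iff (k : Type*) [Field k] [IsAlgClosed k] [CharZero k]
    (lam θ : k) [hm : (singMax k lam).IsPrime] :
    (Ideal.map
        (algebraMap (NodalRing k lam) (Localization.AtPrime (singMax k lam)))
        (Ideal.span {nx k lam ^ 2,
          ny k lam + algebraMap k (NodalRing k lam) θ * nx k lam})).IsPrincipal
      ↔ θ ^ 2 - lam ≠ 0 :=
  ideal_principal_iff_general k lam θ (hm := hm)
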